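/- arXiv:2106.08871 — 2 statements merged into one kernel-verified Lean document; each statement's English description precedes it below -/
import Mathlib

section
/- Let t ≥ 2 and q ≥ 2 be integers, let G be a finite t-broom-free graph, and let V_1, …, V_q be pairwise disjoint nonempty independent sets in G with |V_q| = t such that Q := G[V_1 ∪ ⋯ ∪ V_q] is a complete q-partite graph with parts V_1, …, V_q. Let Z = {v ∈ N(V(Q)) : v is complete to V_q}, let W = {v ∈ N(V(Q)) : v is anticomplete to V_q}, and for each I ⊆ V_1 ∪ ⋯ ∪ V_{q-1} let W_I = {v ∈ W : v is complete to I and anticomplete to (V_1 ∪ ⋯ ∪ V_{q-1}) \ I}. Let I ⊆ V_1 ∪ ⋯ ∪ V_{q-1} and let X_I be a connected component of G[W_I] whose vertex set contains an independent set of size t, and set Z_{X_I} = {z ∈ Z : z is complete to V(X_I)}. Then Z_{X_I} is complete to Z \ Z_{X_I}. -/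
/-!
Suppose `z ∈ Z_{X_I}` and `z' ∈ Z \ Z_{X_I}` are non-adjacent, and pick `w ∈ V_q`; recall that
`X_I ⊆ W` is anticomplete to `V_q`. If `z'` has a neighbour in `X_I`, then, as `X_I` is connected
and `z'` is not complete to it, some edge `xy` of `X_I` has `z'x ∈ E(G)` and `z'y ∉ E(G)`, and
`z'`, `x`, `y` together with the independent `t`-set `V_q` form a `t`-broom centred at `z'`.
Otherwise `z'` is anticomplete to `X_I`, and `z`, `w`, `z'` together with an independent `t`-set
of `X_I` form a `t`-broom centred at `z`.
-/

open SimpleGraph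

/-- The `t`-broom: `K_{1,t+1}` with one edge subdivided once.
Vertex `0` is `u₀`, vertex `1` is `v₁`, vertex `2` is `v₂`,
and vertices `3, …, t+2` are `u₁, …, u_t`. -/
def tBroom (t : ℕ) : SimpleGraph (Fin (t + 3)) :=
  SimpleGraph.fromRel (fun a b =>
    (a = 0 ∧ b = 1) ∨ (a = 1 ∧ b = 2) ∨ (a = 0 ∧ 3 ≤ b.val))

/-- `G` is `H`-free: no induced subgraph of `G` is isomorphic to `H`.
(A graph embedding `H ↪g G` is exactly an isomorphism of `H` onto an induced subgraph of `G`.) -/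
def Free {V W : Type*} (G : SimpleGraph V) (H : SimpleGraph W) : Prop :=
  ¬ Nonempty (H ↪g G)

/-- The neighborhood `N(S)` of a set `S`: vertices outside `S` with a neighbor in `S`. -/
def nbhd {V : Type*} (G : SimpleGraph V) (S : Set V) : Set V :=
  {v | v ∉ S ∧ ∃ u ∈ S, G.Adj u v}

/-- `v` is complete to `S`: adjacent to every vertex of `S`. -/
def CompleteTo {V : Type*} (G : SimpleGraph V) (v : V) (S : Set V) : Prop :=
  ∀ u ∈ S, G.Adj v u

/-- `v` is anticomplete to `S`: adjacent to no vertex of `S`. -/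
def AnticompleteTo {V : Type*} (G : SimpleGraph V) (v : V) (S : Set V) : Prop :=
  ∀ u ∈ S, ¬ G.Adj v u

/-- `v` is neutral to `S`: neither complete nor anticomplete to `S`. -/
def NeutralTo {V : Type*} (G : SimpleGraph V) (v : V) (S : Set V) : Prop :=
  ¬ CompleteTo G v S ∧ ¬ AnticompleteTo G v S

/-- `S` is an independent set of size `s` in `G`. -/
def IsNIndepSet' {V : Type*} (G : SimpleGraph V) (s : ℕ) (S : Finset V) : Prop :=
  S.card = s ∧ ∀ u ∈ S, ∀ v ∈ S, u ≠ v → ¬ G.Adj u v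

/-- `R` has the Ramsey property for `(s, n)`: every finite simple graph on at least `R`
vertices contains an independent set of size `s` or a clique of size `n`. -/
def RamseyProp (R s n : ℕ) : Prop :=
  ∀ (W : Type) [Fintype W] (H : SimpleGraph W), R ≤ Fintype.card W →
    (∃ S : Finset W, IsNIndepSet' H s S) ∨ (∃ S : Finset W, H.IsNClique n S)

/-- The distance (in `ℕ∞`) from a set `S` to a vertex `v`:
the minimum over `u ∈ S` of the distance from `u` to `v`. -/
noncomputable def eDistSet {V : Type*} (G : SimpleGraph V) (S : Set V) (v : V) : ℕ∞ :=
  ⨅ u ∈ S, G.edist u v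

/-- `N^i(S)`: the set of vertices (outside `S`) at distance exactly `i` from `S`. -/
noncomputable def distNbhd {V : Type*} (G : SimpleGraph V) (S : Set V) (i : ℕ) : Set V :=
  {v | v ∉ S ∧ eDistSet G S v = (i : ℕ∞)}

/-- `N^{≥ i}(S) = ⋃_{j ≥ i} N^j(S)`. -/
noncomputable def distNbhdGe {V : Type*} (G : SimpleGraph V) (S : Set V) (i : ℕ) : Set V :=
  ⋃ j ∈ {j : ℕ | i ≤ j}, distNbhd G S j

/-- Given the union `U = V_1 ∪ ⋯ ∪ V_{q-1}` and the last part `Vq`, the set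
`W_I = {v ∈ W : v complete to I, anticomplete to U \ I}`, where
`W = {v ∈ N(U ∪ Vq) : v anticomplete to Vq}`. -/
def Wpart {V : Type*} (G : SimpleGraph V) (U Vq I : Set V) : Set V :=
  {v ∈ nbhd G (U ∪ Vq) | AnticompleteTo G v Vq ∧ CompleteTo G v I ∧
    AnticompleteTo G v (U \ I)}

lemma tBroom_adj_iff {t : ℕ} {a b : Fin (t + 3)} :
    (tBroom t).Adj a b ↔ a ≠ b ∧
      ((a.val = 0 ∧ b.val = 1) ∨ (a.val = 1 ∧ b.val = 2) ∨ (a.val = 0 ∧ 3 ≤ b.val) ∨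
        (b.val = 0 ∧ a.val = 1) ∨ (b.val = 1 ∧ a.val = 2) ∨ (b.val = 0 ∧ 3 ≤ a.val)) := by
  simp only [tBroom, fromRel_adj, Fin.ext_iff, Fin.val_zero, Fin.val_one, Fin.val_two, or_assoc]

lemma nonempty_tBroom_embedding {V : Type*} {G : SimpleGraph V} {t : ℕ} {u₀ v₁ v₂ : V}
    {S : Finset V} (hS : IsNIndepSet' G t S) (h01 : G.Adj u₀ v₁) (h12 : G.Adj v₁ v₂)
    (h02 : ¬ G.Adj u₀ v₂) (hne02 : u₀ ≠ v₂) (h0S : CompleteTo G u₀ S)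
    (h1S : AnticompleteTo G v₁ S) (h2S : AnticompleteTo G v₂ S) :
    Nonempty (tBroom t ↪g G) := by
  let s : Fin t ↪ V := (S.equivFin.trans (finCongr hS.1)).symm.toEmbedding.trans
    (Function.Embedding.subtype _)
  have hs (i : Fin t) : s i ∈ S := Subtype.prop _
  have h0s (i : Fin t) : G.Adj u₀ (s i) ∧ G.Adj (s i) u₀ := ⟨h0S _ (hs i), (h0S _ (hs i)).symm⟩
  have h1s (i : Fin t) : ¬ G.Adj v₁ (s i) ∧ ¬ G.Adj (s i) v₁ :=
    ⟨h1S _ (hs i), fun h => h1S _ (hs i) h.symm⟩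
  have h2s (i : Fin t) : ¬ G.Adj v₂ (s i) ∧ ¬ G.Adj (s i) v₂ :=
    ⟨h2S _ (hs i), fun h => h2S _ (hs i) h.symm⟩
  have hss (i j : Fin t) : ¬ G.Adj (s i) (s j) := by
    rcases eq_or_ne i j with rfl | hij
    · exact G.irrefl
    · exact hS.2 _ (hs i) _ (hs j) (s.injective.ne hij)
  let f : Fin (t + 3) → V := Fin.cons u₀ (Fin.cons v₁ (Fin.cons v₂ s))
  have hinj : Function.Injective f := by
    simp only [f, Fin.cons_injective_iff, Set.mem_range, Fin.exists_fin_succ, Fin.cons_zero,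
      Fin.cons_succ, not_exists, not_or]
    exact ⟨⟨h01.ne', hne02.symm, fun i => (h0s i).1.ne'⟩,
      ⟨h12.ne', fun i h => (h2s i).2 (h ▸ h12)⟩, fun i h => (h1s i).1 (h ▸ h12), s.injective⟩
  have hadj (a b : Fin (t + 3)) : G.Adj (f a) (f b) ↔ (tBroom t).Adj a b := by
    refine a.cases ?_ (fun a => a.cases ?_ (fun a => a.cases ?_ (fun i => ?_))) <;>
    refine b.cases ?_ (fun b => b.cases ?_ (fun b => b.cases ?_ (fun j => ?_))) <;>
    simp only [f, Fin.cons_zero, Fin.cons_succ, tBroom_adj_iff, ne_eq, Fin.ext_iff, Fin.val_succ,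
      Fin.val_zero] <;>
    simp [h01, h12, h01.symm, h12.symm, h02, (mt G.adj_symm h02 : ¬ G.Adj v₂ u₀), h0s, h1s,
      h2s, hss]
  exact ⟨⟨⟨f, hinj⟩, hadj _ _⟩⟩

lemma not_neutralTo_connectedComponent_of_free {V : Type*} {G : SimpleGraph V} {t : ℕ}
    (hfree : _root_.Free G (tBroom t)) {S : Finset V} (hS : IsNIndepSet' G t S) {W : Set V}
    (hWS : ∀ x ∈ W, AnticompleteTo G x S) (C : (G.induce W).ConnectedComponent) {v : V}
    (hvW : v ∉ W) (hvS : CompleteTo G v S) :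
    ¬ NeutralTo G v (Subtype.val '' C.supp) := by
  rintro ⟨hnc, hna⟩
  simp only [CompleteTo, AnticompleteTo, Set.forall_mem_image, not_forall, not_not] at hnc hna
  obtain ⟨a, haC, hva⟩ := hna
  obtain ⟨b, hbC, hvb⟩ := hnc
  obtain ⟨p⟩ := ConnectedComponent.reachable_of_mem_supp C haC hbC
  obtain ⟨d, -, hx, hy⟩ := p.exists_boundary_dart {x | G.Adj v x} hva hvb
  exact hfree (nonempty_tBroom_embedding hS hx d.adj hy (fun h => hvW (h ▸ d.snd.2)) hvS
    (hWS _ d.fst.2) (hWS _ d.snd.2))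

theorem ZX_complete_to_complement_general (t q : ℕ) (ht : 2 ≤ t)
    (V : Type) (G : SimpleGraph V) (hfree : _root_.Free G (tBroom t))
    (Vs : Fin (q - 1) → Set V) (Vq : Set V)
    (hVq : Vq.ncard = t)
    (hindepq : ∀ u ∈ Vq, ∀ w ∈ Vq, ¬ G.Adj u w)
    (I : Set V)
    (C : (G.induce (Wpart G (⋃ i, Vs i) Vq I)).ConnectedComponent)
    (hindepC : ∃ T : Finset V, IsNIndepSet' G t T ∧ ↑T ⊆ Subtype.val '' C.supp) :
    ∀ z ∈ {v ∈ nbhd G ((⋃ i, Vs i) ∪ Vq) | CompleteTo G v Vq ∧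
            CompleteTo G v (Subtype.val '' C.supp)},
      ∀ z' ∈ {v ∈ nbhd G ((⋃ i, Vs i) ∪ Vq) | CompleteTo G v Vq} \
             {v ∈ nbhd G ((⋃ i, Vs i) ∪ Vq) | CompleteTo G v Vq ∧
               CompleteTo G v (Subtype.val '' C.supp)},
        G.Adj z z' := by
  rintro z ⟨-, hzVq, hzX⟩ z' ⟨⟨hz'N, hz'Vq⟩, hz'Z⟩
  have hWVq : ∀ x ∈ Wpart G (⋃ i, Vs i) Vq I, AnticompleteTo G x Vq := fun x hx => hx.2.1
  have hXW : Subtype.val '' C.supp ⊆ Wpart G (⋃ i, Vs i) Vq I := Subtype.coe_image_subset _ _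
  have hVq_pos : 0 < Vq.ncard := by omega
  obtain ⟨w, hw⟩ := Set.nonempty_of_ncard_ne_zero hVq_pos.ne'
  have hVq_fin : Vq.Finite := Set.finite_of_ncard_pos hVq_pos
  have hVqS : IsNIndepSet' G t hVq_fin.toFinset := by
    refine ⟨by rw [← Set.ncard_eq_toFinset_card Vq hVq_fin, hVq], ?_⟩
    simpa using fun u hu v hv _ => hindepq u hu v hv
  have hz'X : AnticompleteTo G z' (Subtype.val '' C.supp) := by
    by_contra hna
    exact not_neutralTo_connectedComponent_of_free hfree hVqS (by simpa using hWVq) C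
      (fun hz'W => hWVq z' hz'W w hw (hz'Vq w hw)) (by simpa using hz'Vq)
      ⟨fun hc => hz'Z ⟨hz'N, hz'Vq, hc⟩, hna⟩
  by_contra hzz'
  obtain ⟨T, hT, hTX⟩ := hindepC
  exact hfree (nonempty_tBroom_embedding hT (hzVq w hw) (hz'Vq w hw).symm hzz'
    (by rintro rfl; exact hz'Z ⟨hz'N, hz'Vq, hzX⟩) (fun u hu => hzX u (hTX hu))
    (fun u hu h => hWVq u (hXW (hTX hu)) w hw h.symm) (fun u hu => hz'X u (hTX hu)))

/-- Lemma 2.2(iii). With the same setup, if a connected component `X_I`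
of `G[W_I]` contains an independent set of size `t`, then
`Z_{X_I} = {z ∈ Z : z complete to V(X_I)}` is complete to `Z \ Z_{X_I}`. -/
theorem ZX_complete_to_complement (t q : ℕ) (ht : 2 ≤ t) (hq : 2 ≤ q)
    (V : Type) [Fintype V] (G : SimpleGraph V) (hfree : _root_.Free G (tBroom t))
    (Vs : Fin (q - 1) → Set V) (Vq : Set V)
    (hne : ∀ i, (Vs i).Nonempty) (hVq : Vq.ncard = t)
    (hdisj : ∀ i j, i ≠ j → Disjoint (Vs i) (Vs j))
    (hdisjq : ∀ i, Disjoint (Vs i) Vq)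
    (hindep : ∀ i, ∀ u ∈ Vs i, ∀ w ∈ Vs i, ¬ G.Adj u w)
    (hindepq : ∀ u ∈ Vq, ∀ w ∈ Vq, ¬ G.Adj u w)
    (hcomp : ∀ i j, i ≠ j → ∀ u ∈ Vs i, ∀ w ∈ Vs j, G.Adj u w)
    (hcompq : ∀ i, ∀ u ∈ Vs i, ∀ w ∈ Vq, G.Adj u w)
    (I : Set V) (hI : I ⊆ (⋃ i, Vs i))
    (C : (G.induce (Wpart G (⋃ i, Vs i) Vq I)).ConnectedComponent)
    (hindepC : ∃ T : Finset V, IsNIndepSet' G t T ∧ ↑T ⊆ Subtype.val '' C.supp) :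
    ∀ z ∈ {v ∈ nbhd G ((⋃ i, Vs i) ∪ Vq) | CompleteTo G v Vq ∧
            CompleteTo G v (Subtype.val '' C.supp)},
      ∀ z' ∈ {v ∈ nbhd G ((⋃ i, Vs i) ∪ Vq) | CompleteTo G v Vq} \
             {v ∈ nbhd G ((⋃ i, Vs i) ∪ Vq) | CompleteTo G v Vq ∧
               CompleteTo G v (Subtype.val '' C.supp)},
        G.Adj z z' :=
  ZX_complete_to_complement_general t q ht V G hfree Vs Vq hVq hindepq I C hindepC
end

section
/- Let t ≥ 3 and q ≥ 2 be integers, let G be a finite {t-broom, K_{t,t}}-free graph, and let V_1, …, V_q be pairwise disjoint independent sets in G with V_i = {v_i} for i ∈ [q-1] and |V_q| = t, such that Q := G[V_1 ∪ ⋯ ∪ V_q] is a complete q-partite graph with parts V_1, …, V_q, with q maximum (there do not exist pairwise disjoint independent sets V'_1, …, V'_{q+1} with |V'_i| = 1 for i ∈ [q] and |V'_{q+1}| = t inducing a complete (q+1)-partite graph). Let A = {v ∈ N(V(Q)) : v is neutral to V_q and not complete to V(Q) \ V_q}, B = {v ∈ N(V(Q)) : v is neutral to V_q and complete to V(Q)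 \ V_q}, W = {v ∈ N(V(Q)) : v is anticomplete to V_q}. Let R be a positive integer with the Ramsey property for (t, ω(G)), and let W_0 = {v ∈ W : the connected component of G[W] containing v has chromatic number at most 3R}. Then A ∪ B is anticomplete to W \ W_0. -/
open SimpleGraph

/-!
Let `a ∈ A ∪ B` be adjacent to `w ∈ W`, and let `D` be the component of `G[W]` containing `w`;
we show `χ(G[D]) ≤ 2R`. Each neighbourhood bounded below has no independent `t`-set, and no
`ω(G)`-clique since its centre would extend it, so it has fewer than `R` vertices.

If every `vᵢ` is complete to `D`, an independent `t`-set in `N(d) ∩ D` would give, together with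
`v₁, …, v_{q-1}, d`, a larger complete multipartite graph than `Q`; so `G[D]` has maximum degree
`< R`. Otherwise the `t`-broom with leaves `V_q` forces some `vⱼ` to be anticomplete to `D`, and
the brooms `a–vⱼ–u'` or `a–u–vⱼ` (with `u, u' ∈ V_q`, `a ∼ u`, `a ≁ u'`) bound `N(a) ∩ D`. Now
layer `G[{a} ∪ D]` by the distance from `a`. A vertex `z` with parent `p` and grandparent `p'`
(or `p' = u` when `p = a`) is the centre of a broom `z–p–p'`, so its neighbours in its own or
later layers that miss `p` are fewer than `R`; those that see `p` are later-layer neighbours of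
`p`, again fewer than `R`. Colouring greedily from the last layer back uses `2R` colours.
-/

lemma tBroom_adj {t : ℕ} {a b : Fin (t + 3)} :
    (tBroom t).Adj a b ↔ a ≠ b ∧
      ((a = 0 ∧ b = 1) ∨ (a = 1 ∧ b = 2) ∨ (a = 0 ∧ 3 ≤ b.val) ∨
        (b = 0 ∧ a = 1) ∨ (b = 1 ∧ a = 2) ∨ (b = 0 ∧ 3 ≤ a.val)) := by
  simp only [tBroom, fromRel_adj]
  tauto

lemma Fin.eq_zero_or_one_or_two_or_succ_succ_succ {n : ℕ} (a : Fin (n + 3)) :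
    a = 0 ∨ a = 1 ∨ a = 2 ∨ ∃ i : Fin n, a = i.succ.succ.succ := by
  induction a using Fin.cases with
  | zero => simp
  | succ a => induction a using Fin.cases with
    | zero => simp
    | succ a => induction a using Fin.cases with
      | zero => simp
      | succ i => simp

section Broom

variable {V : Type*} {G : SimpleGraph V} {t : ℕ}

lemma not_isNIndepSet_of_free_tBroom (hfree : _root_.Free G (tBroom t)) {u₀ v₁ v₂ : V}
    (h₀₁ : G.Adj u₀ v₁) (h₁₂ : G.Adj v₁ v₂) (h₀₂ : ¬ G.Adj u₀ v₂) (hne : u₀ ≠ v₂)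
    {S : Finset V} (hS : ∀ s ∈ S, G.Adj u₀ s ∧ ¬ G.Adj v₁ s ∧ ¬ G.Adj v₂ s) :
    ¬ G.IsNIndepSet t S := by
  rintro ⟨hind, rfl⟩
  let g : Fin S.card ↪ V := S.equivFin.symm.toEmbedding.trans (.subtype _)
  have hg : ∀ i, g i ∈ S := fun i => (S.equivFin.symm i).2
  have h₀ : ∀ i, u₀ ≠ g i := fun i h => G.irrefl (h ▸ (hS _ (hg i)).1)
  have h₁ : ∀ i, v₁ ≠ g i := fun i h => (hS _ (hg i)).2.2 (h ▸ h₁₂.symm)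
  have h₂ : ∀ i, v₂ ≠ g i := fun i h => h₀₂ (h ▸ (hS _ (hg i)).1)
  have hgg : ∀ i j, ¬ G.Adj (g i) (g j) := fun i j h => hind (hg i) (hg j) (G.ne_of_adj h) h
  have hS' : ∀ i, G.Adj (g i) u₀ ∧ ¬ G.Adj (g i) v₁ ∧ ¬ G.Adj (g i) v₂ := fun i => by
    simpa only [G.adj_comm (g i)] using hS _ (hg i)
  let f : Fin (S.card + 3) → V := Fin.cons u₀ (Fin.cons v₁ (Fin.cons v₂ g))
  have f₀ : f 0 = u₀ := rfl
  have f₁ : f 1 = v₁ := rfl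
  have f₂ : f 2 = v₂ := by
    simp only [f, ← Fin.succ_one_eq_two, ← Fin.succ_zero_eq_one, Fin.cons_succ, Fin.cons_zero]
  have f₃ : ∀ i, f i.succ.succ.succ = g i := fun i => rfl
  have hf : ∀ a b, (f a = f b ↔ a = b) ∧ (G.Adj (f a) (f b) ↔ (tBroom S.card).Adj a b) := by
    intro a b
    rcases a.eq_zero_or_one_or_two_or_succ_succ_succ with rfl | rfl | rfl | ⟨i, rfl⟩ <;>
    rcases b.eq_zero_or_one_or_two_or_succ_succ_succ with rfl | rfl | rfl | ⟨j, rfl⟩ <;>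
    simp [f₀, f₁, f₂, f₃, tBroom_adj, Fin.ext_iff, Nat.mod_eq_of_lt, h₀₁, h₁₂, h₀₂, h₀₁.symm,
      h₁₂.symm, h₀₁.ne, h₁₂.ne, hne, h₀₁.ne', h₁₂.ne', hne.symm, mt G.adj_symm h₀₂, h₀, h₁, h₂,
      (h₀ · |>.symm), (h₁ · |>.symm), (h₂ · |>.symm), hS, hS', hg, hgg]
  exact hfree ⟨⟨⟨f, fun a b => (hf a b).1.1⟩, (hf _ _).2⟩⟩

lemma not_isNIndepSet_of_adj_not_adj_of_free_tBroom (hfree : _root_.Free G (tBroom t))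
    {a x u u' : V} (hau : G.Adj a u) (hau' : ¬ G.Adj a u') (hau'ne : a ≠ u') (hax : a ≠ x)
    (hxu : G.Adj x u) (hxu' : G.Adj x u') {S : Finset V}
    (hS : ∀ s ∈ S, G.Adj a s ∧ ¬ G.Adj x s ∧ ¬ G.Adj u s ∧ ¬ G.Adj u' s) :
    ¬ G.IsNIndepSet t S := by
  by_cases hax' : G.Adj a x
  · exact not_isNIndepSet_of_free_tBroom hfree hax' hxu' hau' hau'ne fun s hs =>
      ⟨(hS s hs).1, (hS s hs).2.1, (hS s hs).2.2.2⟩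
  · exact not_isNIndepSet_of_free_tBroom hfree hau hxu.symm hax' hax fun s hs =>
      ⟨(hS s hs).1, (hS s hs).2.2.1, (hS s hs).2.1⟩

lemma adj_of_reachable_of_free_tBroom (hfree : _root_.Free G (tBroom t)) {S : Finset V}
    (hS : G.IsNIndepSet t S) {x : V} (hxS : ∀ s ∈ S, G.Adj x s) {X : Set V} (hxX : x ∉ X)
    (hXS : ∀ y ∈ X, ∀ s ∈ S, ¬ G.Adj y s) {y y' : X} (hyy' : (G.induce X).Reachable y y')
    (hy : G.Adj x y) : G.Adj x y' := by
  obtain ⟨p⟩ := hyy'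
  induction p with
  | nil => exact hy
  | @cons y z _ hyz _ ih =>
    refine ih (by_contra fun hxz => ?_)
    exact not_isNIndepSet_of_free_tBroom hfree hy hyz hxz (fun e => hxX (e ▸ z.2))
      (fun s hs => ⟨hxS s hs, hXS y y.2 s hs, hXS z z.2 s hs⟩) hS

end Broom

section CompleteMultipartite

variable {V : Type*} {G : SimpleGraph V} {t : ℕ}

/-- `{v₁}, …, {v_k}, S` are the parts of an induced complete `(k+1)`-partite subgraph with
`|S| = t` (the graph `Q` of the paper). -/
def IsCliqueJoinIndepSet {k : ℕ} (G : SimpleGraph V) (v : Fin k → V) (S : Set V) (t : ℕ) :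
    Prop :=
  Function.Injective v ∧ S.ncard = t ∧ (∀ i, v i ∉ S) ∧ (∀ u ∈ S, ∀ w ∈ S, ¬ G.Adj u w) ∧
    (∀ i j, i ≠ j → G.Adj (v i) (v j)) ∧ (∀ i, ∀ w ∈ S, G.Adj (v i) w)

lemma isCliqueJoinIndepSet_cons {k : ℕ} {v : Fin k → V} (hinj : Function.Injective v)
    (hcomp : ∀ i j, i ≠ j → G.Adj (v i) (v j)) {d : V} (hd : ∀ i, G.Adj (v i) d)
    {S : Finset V} (hS : G.IsNIndepSet t S) (hSd : ∀ s ∈ S, G.Adj d s)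
    (hSv : ∀ i, ∀ s ∈ S, G.Adj (v i) s) : IsCliqueJoinIndepSet G (Fin.cons d v) S t := by
  refine ⟨Fin.cons_injective_iff.2 ⟨fun ⟨i, hi⟩ => G.irrefl (hi ▸ hd i), hinj⟩,
    by simpa using hS.card_eq,
    Fin.cases (fun h => G.irrefl (hSd d h)) fun i h => G.irrefl (hSv i _ h),
    fun x hx y hy hxy => hS.isIndepSet hx hy (G.ne_of_adj hxy) hxy, ?_, Fin.cases hSd hSv⟩
  refine Fin.cases (Fin.cases (absurd rfl) fun j _ => (hd j).symm) fun i => ?_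
  exact Fin.cases (fun _ => hd i) fun j hij => hcomp i j (fun e => hij (e ▸ rfl))

end CompleteMultipartite

lemma SimpleGraph.ConnectedComponent.preconnected_induce_image_val {V : Type*}
    {G : SimpleGraph V} {s : Set V} (C : (G.induce s).ConnectedComponent) :
    (G.induce (Subtype.val '' C.supp)).Preconnected :=
  C.connected_toSimpleGraph.preconnected.map ⟨fun x => ⟨x.1.1, x.1, x.2, rfl⟩, fun h => h⟩
    (by rintro ⟨_, x, hx, rfl⟩; exact ⟨⟨x, hx⟩, rfl⟩)

lemma SimpleGraph.Connected.exists_adj_dist_add_one {α : Type*} {H : SimpleGraph α}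
    (hH : H.Connected) {r z : α} (hz : z ≠ r) :
    ∃ p, H.Adj p z ∧ H.dist r p + 1 = H.dist r z := by
  obtain ⟨w, hw⟩ := hH.exists_walk_length_eq_dist z r
  cases w with
  | nil => exact absurd rfl hz
  | @cons _ p _ hzp w =>
    refine ⟨p, hzp.symm, ?_⟩
    have h₁ := dist_le w
    have h₂ : H.dist z r ≤ H.dist z p + H.dist p r := hH.dist_triangle
    rw [Walk.length_cons] at hw
    rw [dist_eq_one_iff_adj.2 hzp] at h₂
    rw [dist_comm, H.dist_comm (u := r)]
    omega

section Greedy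

variable {α : Type*} [Fintype α] {H : SimpleGraph α} [DecidableRel H.Adj]

theorem colorable_of_card_filter_le_lt (f : α → ℕ) {K : ℕ}
    (h : ∀ z, ((H.neighborFinset z).filter fun x => f z ≤ f x).card < K) : H.Colorable K := by
  classical
  suffices ∀ s : Finset α, ∃ C : α → ℕ, (∀ x ∈ s, C x < K) ∧
      ∀ x ∈ s, ∀ y ∈ s, H.Adj x y → C x ≠ C y by
    obtain ⟨C, hK, hC⟩ := this Finset.univ
    exact ⟨Coloring.mk (fun x => ⟨C x, hK x (Finset.mem_univ x)⟩)
      fun hxy e => hC _ (Finset.mem_univ _) _ (Finset.mem_univ _) hxy (congrArg Fin.val e)⟩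
  intro s
  induction s using Finset.induction_on_min_value f with
  | empty => exact ⟨fun _ => 0, by simp, by simp⟩
  | insert z s hzs hmin ih =>
    obtain ⟨C, hK, hC⟩ := ih
    have hne : ∀ x ∈ s, x ≠ z := fun x hx => ne_of_mem_of_not_mem hx hzs
    have hused : (((H.neighborFinset z).filter (· ∈ s)).image C).card < (Finset.range K).card := by
      rw [Finset.card_range]
      refine Finset.card_image_le.trans_lt ((Finset.card_le_card fun x hx => ?_).trans_lt (h z))
      simp only [Finset.mem_filter] at hx ⊢
      exact ⟨hx.1, hmin x hx.2⟩
    obtain ⟨c, hcK, hc⟩ := Finset.exists_mem_notMem_of_card_lt_card hused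
    have hz : ∀ y ∈ s, H.Adj z y → Function.update C z c z ≠ Function.update C z c y := by
      intro y hy hzy
      rw [Function.update_self, Function.update_of_ne (hne y hy)]
      exact fun e => hc (Finset.mem_image.2 ⟨y, by simpa using ⟨hzy, hy⟩, e.symm⟩)
    refine ⟨Function.update C z c, ?_, ?_⟩ <;> simp only [Finset.forall_mem_insert]
    · refine ⟨by simpa using hcK, fun x hx => ?_⟩
      rw [Function.update_of_ne (hne x hx)]
      exact hK x hx
    · refine ⟨⟨fun h => absurd h H.irrefl, hz⟩, fun x hx => ⟨fun h => (hz x hx h.symm).symm, ?_⟩⟩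
      intro y hy hxy
      rw [Function.update_of_ne (hne x hx), Function.update_of_ne (hne y hy)]
      exact hC x hx y hy hxy

theorem colorable_of_degree_lt {K : ℕ} (h : ∀ z, H.degree z < K) : H.Colorable K :=
  colorable_of_card_filter_le_lt (fun _ => 0) fun z => by
    simpa [card_neighborFinset_eq_degree] using h z

theorem SimpleGraph.Connected.colorable_two_mul_of_dist (hH : H.Connected) (r : α) {K : ℕ}
    (hroot : H.degree r < K)
    (hstep : ∀ p z, H.Adj p z → H.dist r p + 1 = H.dist r z →
      ((H.neighborFinset z).filter fun x => H.dist r z ≤ H.dist r x ∧ ¬ H.Adj p x).card < K) :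
    H.Colorable (2 * K) := by
  classical
  have hroot' : ∀ P : α → Prop, ∀ [DecidablePred P], ((H.neighborFinset r).filter P).card < K :=
    fun P _ => (Finset.card_filter_le _ _).trans_lt (by rwa [card_neighborFinset_eq_degree])
  have hforward : ∀ y, ((H.neighborFinset y).filter fun x => H.dist r y < H.dist r x).card < K := by
    intro y
    rcases eq_or_ne y r with rfl | hy
    · exact hroot' _
    obtain ⟨p, hpy, hp⟩ := hH.exists_adj_dist_add_one hy
    refine (Finset.card_le_card fun x hx => ?_).trans_lt (hstep p y hpy hp)
    simp only [Finset.mem_filter, mem_neighborFinset] at hx ⊢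
    refine ⟨hx.1, hx.2.le, fun hpx => ?_⟩
    have := hpx.diff_dist_adj (u := r)
    omega
  refine colorable_of_card_filter_le_lt (H.dist r) fun z => ?_
  rcases eq_or_ne z r with rfl | hz
  · exact (hroot' _).trans_le (by omega)
  obtain ⟨p, hpz, hp⟩ := hH.exists_adj_dist_add_one hz
  calc _ ≤ ((H.neighborFinset z).filter fun x => H.dist r z ≤ H.dist r x ∧ ¬ H.Adj p x).card +
        ((H.neighborFinset p).filter fun x => H.dist r p < H.dist r x).card := by
        refine (Finset.card_le_card fun x hx => ?_).trans (Finset.card_union_le _ _)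
        simp only [Finset.mem_union, Finset.mem_filter, mem_neighborFinset] at hx ⊢
        by_cases hpx : H.Adj p x
        · exact Or.inr ⟨hpx, by omega⟩
        · exact Or.inl ⟨hx.1, hx.2, hpx⟩
    _ < K + K := add_lt_add (hstep p z hpz hp) (hforward p)
    _ = 2 * K := (two_mul K).symm

end Greedy

section Ramsey

variable {V : Type} [Fintype V] {G : SimpleGraph V} {t R : ℕ}

lemma card_lt_of_forall_not_isNIndepSet (hRam : RamseyProp R t G.cliqueNum) {z : V}
    {Y : Finset V} (hY : ∀ y ∈ Y, G.Adj z y) (hind : ∀ S ⊆ Y, ¬ G.IsNIndepSet t S) :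
    Y.card < R := by
  classical
  by_contra! hR
  rcases hRam Y (G.induce Y) (by simpa using hR) with ⟨S, hcard, hS⟩ | ⟨S, hS⟩
  · refine hind (S.map (.subtype _)) (fun x => by simp +contextual) ⟨?_, by simpa using hcard⟩
    simp only [Finset.coe_map, Function.Embedding.coe_subtype]
    rintro _ ⟨x, hx, rfl⟩ _ ⟨y, hy, rfl⟩ hxy
    exact hS x hx y hy (fun h => hxy (congrArg _ h))
  · have hclique := ((isNClique_induce_iff _ _ _).1 hS).insert (a := z) (by simp_all)
    have := hclique.isClique.card_le_cliqueNum
    rw [hclique.card_eq] at this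
    omega

lemma card_lt_of_free_tBroom (hfree : _root_.Free G (tBroom t))
    (hRam : RamseyProp R t G.cliqueNum) {z p p' : V} (hzp : G.Adj z p) (hpp' : G.Adj p p')
    (hzp' : ¬ G.Adj z p') (hne : z ≠ p') {Y : Finset V}
    (hY : ∀ y ∈ Y, G.Adj z y ∧ ¬ G.Adj p y ∧ ¬ G.Adj p' y) : Y.card < R :=
  card_lt_of_forall_not_isNIndepSet hRam (fun y hy => (hY y hy).1) fun _ hS =>
    not_isNIndepSet_of_free_tBroom hfree hzp hpp' hzp' hne fun s hs => hY s (hS hs)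

lemma card_filter_neighborFinset_induce_lt (hfree : _root_.Free G (tBroom t))
    (hRam : RamseyProp R t G.cliqueNum) {X : Set V} [Fintype X] [DecidableRel (G.induce X).Adj]
    {z : X} {p p' : V} (hzp : G.Adj z p) (hpp' : G.Adj p p') (hzp' : ¬ G.Adj z p')
    (hne : (z : V) ≠ p') {P : X → Prop} [DecidablePred P]
    (hP : ∀ y : X, G.Adj z y → P y → ¬ G.Adj p y ∧ ¬ G.Adj p' y) :
    (((G.induce X).neighborFinset z).filter P).card < R := by
  rw [← Finset.card_map (.subtype _)]
  refine card_lt_of_free_tBroom hfree hRam hzp hpp' hzp' hne fun y hy => ?_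
  simp only [Finset.mem_map, Finset.mem_filter, mem_neighborFinset] at hy
  obtain ⟨y, ⟨hzy, hy⟩, rfl⟩ := hy
  exact ⟨hzy, hP y hzy hy⟩

lemma colorable_induce_of_forall_adj (hRam : RamseyProp R t G.cliqueNum) {k : ℕ}
    {v : Fin k → V} (hmax : ¬ ∃ (v' : Fin (k + 1) → V) (S : Set V), IsCliqueJoinIndepSet G v' S t)
    (hinj : Function.Injective v) (hcomp : ∀ i j, i ≠ j → G.Adj (v i) (v j)) {D : Set V}
    (hD : ∀ i, ∀ d ∈ D, G.Adj (v i) d) : (G.induce D).Colorable R := by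
  classical
  refine colorable_of_degree_lt fun z => ?_
  rw [← card_neighborFinset_eq_degree, ← Finset.card_map (.subtype _)]
  have hN : ∀ y ∈ ((G.induce D).neighborFinset z).map (.subtype _), y ∈ D ∧ G.Adj z y :=
    fun y hy => by simpa [and_comm] using hy
  refine card_lt_of_forall_not_isNIndepSet hRam (fun y hy => (hN y hy).2) fun S hS hind => hmax
    ⟨_, _, isCliqueJoinIndepSet_cons hinj hcomp (fun i => hD i z z.2) hind
      (fun s hs => (hN s (hS hs)).2) fun i s hs => hD i s (hN s (hS hs)).1⟩

lemma colorable_induce_two_mul_of_free_tBroom (hfree : _root_.Free G (tBroom t))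
    (hRam : RamseyProp R t G.cliqueNum) {D : Set V} (hD : (G.induce D).Preconnected)
    {a w u : V} (hwD : w ∈ D) (haw : G.Adj a w) (hau : G.Adj a u) (huD : u ∉ D)
    (hDu : ∀ d ∈ D, ¬ G.Adj u d)
    (hroot : ∀ S : Finset V, (∀ s ∈ S, s ∈ D ∧ G.Adj a s) → ¬ G.IsNIndepSet t S) :
    (G.induce D).Colorable (2 * R) := by
  classical
  let X : Set V := {a} ∪ D
  let H := G.induce X
  let r : X := ⟨a, Or.inl rfl⟩
  have hconn : H.Connected :=
    connected_induce_union Preconnected.of_subsingleton hD (Set.mem_singleton a) hwD haw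
  have hXD : ∀ x : X, x ≠ r → (x : V) ∈ D := fun x hx =>
    x.2.resolve_left fun h => hx (Subtype.ext h)
  have hgap : ∀ x y : X, H.Adj x y → H.dist r y ≤ H.dist r x + 1 := fun x y hxy => by
    have := hxy.diff_dist_adj (u := r)
    omega
  refine (hconn.colorable_two_mul_of_dist r ?_ ?_).of_hom
    (induceHomOfLE G Set.subset_union_right).toHom
  · have hN : ∀ y ∈ (H.neighborFinset r).map (.subtype _), y ∈ D ∧ G.Adj a y := by
      intro y hy
      obtain ⟨y, hry, rfl⟩ := Finset.mem_map.1 hy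
      rw [mem_neighborFinset] at hry
      exact ⟨hXD y hry.ne', hry⟩
    rw [← card_neighborFinset_eq_degree, ← Finset.card_map (.subtype _)]
    exact card_lt_of_forall_not_isNIndepSet hRam (fun y hy => (hN y hy).2)
      fun S hS => hroot S fun s hs => hN s (hS hs)
  · intro p z hpz hp
    have hr : ∀ y : X, H.dist r z ≤ H.dist r y → y ≠ r := by
      rintro y hy rfl
      rw [dist_self] at hy
      omega
    have hzr : z ≠ r := hr z le_rfl
    rcases eq_or_ne p r with rfl | hpr
    · exact card_filter_neighborFinset_induce_lt hfree hRam hpz.symm hau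
        (fun h => hDu _ (hXD z hzr) h.symm) (fun e => huD (e ▸ hXD z hzr))
        fun y _ hy => ⟨hy.2, hDu _ (hXD y (hr y hy.1))⟩
    · obtain ⟨p', hp'p, hp'⟩ := hconn.exists_adj_dist_add_one hpr
      refine card_filter_neighborFinset_induce_lt hfree hRam hpz.symm hp'p.symm (fun h => ?_)
        (fun e => ?_) fun y _ hy => ⟨hy.2, fun h => ?_⟩
      · have := hgap _ _ h.symm
        omega
      · rw [Subtype.ext e] at hp
        omega
      · have := hgap _ _ h
        omega

lemma colorable_induce_of_adj_neutralTo (hfree : _root_.Free G (tBroom t))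
    (hRam : RamseyProp R t G.cliqueNum) {k : ℕ} {v : Fin k → V} {Vq : Set V}
    (hinj : Function.Injective v) (hVq : Vq.ncard = t)
    (hindepq : ∀ u ∈ Vq, ∀ w ∈ Vq, ¬ G.Adj u w) (hcomp : ∀ i j, i ≠ j → G.Adj (v i) (v j))
    (hcompq : ∀ i, ∀ w ∈ Vq, G.Adj (v i) w)
    (hmax : ¬ ∃ (v' : Fin (k + 1) → V) (S : Set V), IsCliqueJoinIndepSet G v' S t)
    {D : Set V} (hD : (G.induce D).Preconnected)
    (hDQ : ∀ d ∈ D, d ∉ Set.range v ∪ Vq ∧ AnticompleteTo G d Vq) {a w : V}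
    (haQ : a ∉ Set.range v ∪ Vq) (hneu : NeutralTo G a Vq) (hwD : w ∈ D) (haw : G.Adj a w) :
    (G.induce D).Colorable (2 * R) := by
  obtain ⟨S, rfl⟩ := Vq.toFinite.exists_finset_coe
  have hS : G.IsNIndepSet t S := ⟨fun x hx y hy _ => hindepq x hx y hy, by simpa using hVq⟩
  by_cases hcase : ∀ i, ∀ d ∈ D, G.Adj (v i) d
  · exact (colorable_induce_of_forall_adj hRam hmax hinj hcomp hcase).mono (by omega)
  push Not at hcase
  obtain ⟨j, d₀, hd₀, hjd₀⟩ := hcase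
  have hjD : ∀ d ∈ D, ¬ G.Adj (v j) d := fun d hd hjd => hjd₀ <|
    adj_of_reachable_of_free_tBroom hfree hS (hcompq j) (fun h => (hDQ _ h).1 (Or.inl ⟨j, rfl⟩))
      (fun y hy => (hDQ y hy).2) (hD ⟨d, hd⟩ ⟨d₀, hd₀⟩) hjd
  obtain ⟨⟨u, huS, hau⟩, u', hu'S, hau'⟩ : (∃ u ∈ S, G.Adj a u) ∧ ∃ u' ∈ S, ¬ G.Adj a u' := by
    simpa [NeutralTo, CompleteTo, AnticompleteTo, and_comm] using hneu
  have hSD : ∀ s ∈ S, ∀ d ∈ D, ¬ G.Adj s d := fun s hs d hd h => (hDQ d hd).2 s hs h.symm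
  refine colorable_induce_two_mul_of_free_tBroom hfree hRam hD hwD haw hau
    (fun h => (hDQ u h).1 (Or.inr huS)) (hSD u huS) fun S' hS' => ?_
  exact not_isNIndepSet_of_adj_not_adj_of_free_tBroom hfree hau hau'
    (fun e => haQ (Or.inr (e ▸ hu'S))) (fun e => haQ (Or.inl ⟨j, e.symm⟩))
    (hcompq j u huS) (hcompq j u' hu'S) fun s hs =>
      ⟨(hS' s hs).2, hjD s (hS' s hs).1, hSD u huS s (hS' s hs).1, hSD u' hu'S s (hS' s hs).1⟩

end Ramsey

theorem AB_anticomplete_W_minus_W0_general (t q : ℕ) (hq : 2 ≤ q)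
    (V : Type) [Fintype V] (G : SimpleGraph V)
    (hfree : _root_.Free G (tBroom t))
    (v : Fin (q - 1) → V) (Vq : Set V)
    (hinj : Function.Injective v) (hVq : Vq.ncard = t)
    (hindepq : ∀ u ∈ Vq, ∀ w ∈ Vq, ¬ G.Adj u w)
    (hcomp : ∀ i j, i ≠ j → G.Adj (v i) (v j))
    (hcompq : ∀ i, ∀ w ∈ Vq, G.Adj (v i) w)
    (hmax : ¬ ∃ (v' : Fin q → V) (Vq' : Set V),
        Function.Injective v' ∧ Vq'.ncard = t ∧ (∀ i, v' i ∉ Vq') ∧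
        (∀ u ∈ Vq', ∀ w ∈ Vq', ¬ G.Adj u w) ∧
        (∀ i j, i ≠ j → G.Adj (v' i) (v' j)) ∧
        (∀ i, ∀ w ∈ Vq', G.Adj (v' i) w))
    (R : ℕ) (hRam : RamseyProp R t G.cliqueNum)
    -- the sets `A`, `B`, `W`, `W₀`:
    (A B W W₀ : Set V)
    (hA : A = {x ∈ nbhd G (Set.range v ∪ Vq) | NeutralTo G x Vq ∧
            ¬ CompleteTo G x ((Set.range v ∪ Vq) \ Vq)})
    (hB : B = {x ∈ nbhd G (Set.range v ∪ Vq) | NeutralTo G x Vq ∧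
            CompleteTo G x ((Set.range v ∪ Vq) \ Vq)})
    (hW : W = {x ∈ nbhd G (Set.range v ∪ Vq) | AnticompleteTo G x Vq})
    (hW₀ : W₀ = {w : V | ∃ hw : w ∈ W,
        (G.induce (Subtype.val ''
            ((G.induce W).connectedComponentMk ⟨w, hw⟩).supp)).chromaticNumber
          ≤ ((3 * R : ℕ) : ℕ∞)}) :
    ∀ a ∈ A ∪ B, ∀ w ∈ W \ W₀, ¬ G.Adj a w := by
  intro a ha w ⟨hwW, hwW₀⟩ haw
  obtain ⟨k, rfl⟩ : ∃ k, q = k + 1 := ⟨q - 1, by omega⟩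
  obtain ⟨⟨haQ, -⟩, hneu⟩ : a ∈ nbhd G (Set.range v ∪ Vq) ∧ NeutralTo G a Vq := by
    rcases ha with ha | ha
    · rw [hA] at ha; exact ⟨ha.1, ha.2.1⟩
    · rw [hB] at ha; exact ⟨ha.1, ha.2.1⟩
  set C := (G.induce W).connectedComponentMk ⟨w, hwW⟩
  have hDQ : ∀ d ∈ Subtype.val '' C.supp, d ∉ Set.range v ∪ Vq ∧ AnticompleteTo G d Vq := by
    rintro _ ⟨⟨d, hd⟩, -, rfl⟩
    rw [hW] at hd
    exact ⟨hd.1.1, hd.2⟩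
  refine hwW₀ (hW₀ ▸ ⟨hwW, ?_⟩)
  exact ((colorable_induce_of_adj_neutralTo hfree hRam hinj hVq hindepq hcomp hcompq hmax
    C.preconnected_induce_image_val hDQ haQ hneu ⟨⟨w, hwW⟩, rfl, rfl⟩ haw).mono
    (by omega)).chromaticNumber_le

/-- Claim 4.4. Let `t ≥ 3`, `G` `{t-broom, K_{t,t}}`-free, `Q` complete
`q`-partite with singleton parts `V_1, …, V_{q-1}` and `|V_q| = t`, with `q` maximum.  With
`A`, `B`, `W` as in the paper, `R` with the Ramsey property for `(t, ω(G))`, and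
`W_0 = {w ∈ W : the component of G[W] containing w has chromatic number ≤ 3R}`,
the set `A ∪ B` is anticomplete to `W \ W_0`. -/
theorem AB_anticomplete_W_minus_W0 (t q : ℕ) (ht : 3 ≤ t) (hq : 2 ≤ q)
    (V : Type) [Fintype V] (G : SimpleGraph V)
    (hfree : _root_.Free G (tBroom t)) (hfree' : _root_.Free G (completeBipartiteGraph (Fin t) (Fin t)))
    (v : Fin (q - 1) → V) (Vq : Set V)
    (hinj : Function.Injective v) (hVq : Vq.ncard = t)
    (hdisjq : ∀ i, v i ∉ Vq)
    (hindepq : ∀ u ∈ Vq, ∀ w ∈ Vq, ¬ G.Adj u w)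
    (hcomp : ∀ i j, i ≠ j → G.Adj (v i) (v j))
    (hcompq : ∀ i, ∀ w ∈ Vq, G.Adj (v i) w)
    (hmax : ¬ ∃ (v' : Fin q → V) (Vq' : Set V),
        Function.Injective v' ∧ Vq'.ncard = t ∧ (∀ i, v' i ∉ Vq') ∧
        (∀ u ∈ Vq', ∀ w ∈ Vq', ¬ G.Adj u w) ∧
        (∀ i j, i ≠ j → G.Adj (v' i) (v' j)) ∧
        (∀ i, ∀ w ∈ Vq', G.Adj (v' i) w))
    (R : ℕ) (hR : 0 < R) (hRam : RamseyProp R t G.cliqueNum)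
    -- the sets `A`, `B`, `W`, `W₀`:
    (A B W W₀ : Set V)
    (hA : A = {x ∈ nbhd G (Set.range v ∪ Vq) | NeutralTo G x Vq ∧
            ¬ CompleteTo G x ((Set.range v ∪ Vq) \ Vq)})
    (hB : B = {x ∈ nbhd G (Set.range v ∪ Vq) | NeutralTo G x Vq ∧
            CompleteTo G x ((Set.range v ∪ Vq) \ Vq)})
    (hW : W = {x ∈ nbhd G (Set.range v ∪ Vq) | AnticompleteTo G x Vq})
    (hW₀ : W₀ = {w : V | ∃ hw : w ∈ W,
        (G.induce (Subtype.val ''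
            ((G.induce W).connectedComponentMk ⟨w, hw⟩).supp)).chromaticNumber
          ≤ ((3 * R : ℕ) : ℕ∞)}) :
    ∀ a ∈ A ∪ B, ∀ w ∈ W \ W₀, ¬ G.Adj a w :=
  AB_anticomplete_W_minus_W0_general t q hq V G hfree v Vq hinj hVq hindepq hcomp hcompq hmax R hRam
    A B W W₀ hA hB hW hW₀
end
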